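/- Let n ≥ 1 and let L be a positive integer with 2n | L. Then the half-shifted correlation matrix for f(z) = z^n + 1 satisfies the selection rule G^{(z^n+1)}(L)_{ij} = 0 for all i,j ∈ {1,…,L} with n ∤ (i − j). -/

import Mathlib

/-!
The nodes `ζ_k = exp (i θ_k)` form a coset of the `L`-th roots of unity, so when `L = n m` the
shift `k ↦ k + m` multiplies every node by the primitive `n`-th root of unity `w = exp (2πi/n)`.
Since `f(z) = zⁿ + 1` is invariant under `z ↦ w z`, this shift multiplies the summand of
`G_{ij}` by `w^{i-j}`, which differs from `1` when `n ∤ i - j`; hence the sum vanishes.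
-/

open scoped BigOperators Matrix

/-- `θ_k = (2π/L)(k - 1/2)` for `k = 1, …, L` (here `k : Fin L` is the 0-based index,
so `θ_k = (2π/L)(k + 1/2)`). -/
noncomputable def theta (L : ℕ) (k : Fin L) : ℝ :=
  2 * Real.pi / L * ((k : ℝ) + 1 / 2)

noncomputable def Gf (L : ℕ) (f : ℂ → ℂ) : Matrix (Fin L) (Fin L) ℂ :=
  Matrix.of fun n m : Fin L =>
    (-1 : ℂ) ^ ((n : ℤ) - (m : ℤ)) / (L : ℂ) *
      ∑ k : Fin L,
        f (Complex.exp (Complex.I * (theta L k : ℂ))) /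
            ((‖f (Complex.exp (Complex.I * (theta L k : ℂ)))‖ : ℝ) : ℂ) *
          Complex.exp (Complex.I * (theta L k : ℂ) * (((n : ℤ) - (m : ℤ) : ℤ) : ℂ))

open Complex Fin.NatCast
open scoped Real

theorem Fintype.sum_eq_zero_of_comp_equiv_eq_mul {ι R : Type*} [Fintype ι] [CommRing R]
    [NoZeroDivisors R] (e : ι ≃ ι) {g : ι → R} {c : R} (hc : c ≠ 1)
    (h : ∀ k, g (e k) = c * g k) : ∑ k, g k = 0 := by
  have hsum : c * ∑ k, g k = ∑ k, g k := by
    rw [Finset.mul_sum, ← e.sum_comp g]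
    simp only [h]
  exact (mul_left_eq_self₀.mp hsum).resolve_left hc

theorem exp_I_mul_theta (L : ℕ) (k : Fin L) :
    exp (I * theta L k) = exp (π * I / L) * exp (2 * π * I / L) ^ (k : ℕ) := by
  rw [← exp_nat_mul, ← exp_add, theta]
  push_cast
  ring_nf

theorem exp_I_mul_theta_add_natCast {L : ℕ} [NeZero L] (k : Fin L) (m : ℕ) :
    exp (I * theta L (k + m)) = exp (I * theta L k) * exp (2 * π * I / L) ^ m := by
  have hord : orderOf (exp (2 * π * I / L)) = L :=
    ((isPrimitiveRoot_exp L (NeZero.ne L)).eq_orderOf).symm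
  have hmod : ∀ a, exp (2 * π * I / L) ^ (a % L) = exp (2 * π * I / L) ^ a := fun a => by
    simpa only [hord] using pow_mod_orderOf (exp (2 * π * I / L)) a
  rw [exp_I_mul_theta, exp_I_mul_theta, Fin.val_add, Fin.val_natCast, hmod, pow_add, hmod,
    ← mul_assoc]

theorem exp_two_pi_mul_I_div_pow_of_eq_mul {L n m : ℕ} (hL : L = n * m) (hL0 : L ≠ 0) :
    exp (2 * π * I / L) ^ m = exp (2 * π * I / n) := by
  subst hL
  obtain ⟨hn, hm⟩ : (n : ℂ) ≠ 0 ∧ (m : ℂ) ≠ 0 := by exact_mod_cast mul_ne_zero_iff.mp hL0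
  rw [← exp_nat_mul]
  congr 1
  push_cast
  field_simp

theorem Gf_apply_eq_zero_of_rotation_invariant {L n m : ℕ} (f : ℂ → ℂ) (hL : L = n * m)
    (hf : ∀ z, f (z * exp (2 * π * I / n)) = f z) (i j : Fin L)
    (hij : ¬ (n : ℤ) ∣ (i : ℤ) - (j : ℤ)) : Gf L f i j = 0 := by
  have : NeZero L := ⟨i.pos.ne'⟩
  have hn : n ≠ 0 := by rintro rfl; exact NeZero.ne L (by rw [hL, zero_mul])
  set d : ℤ := (i : ℤ) - (j : ℤ)
  set w := exp (2 * π * I / n)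
  have hwd : w ^ d ≠ 1 := fun h => hij (((isPrimitiveRoot_exp n hn).zpow_eq_one_iff_dvd d).mp h)
  have hsum : ∑ k : Fin L, f (exp (I * theta L k)) / (‖f (exp (I * theta L k))‖ : ℂ) *
      exp (I * theta L k * d) = 0 := by
    refine Fintype.sum_eq_zero_of_comp_equiv_eq_mul (Equiv.addRight (m : Fin L)) hwd fun k => ?_
    simp only [Equiv.coe_addRight]
    rw [mul_comm _ (d : ℂ), mul_comm _ (d : ℂ), exp_int_mul, exp_int_mul,
      exp_I_mul_theta_add_natCast, exp_two_pi_mul_I_div_pow_of_eq_mul hL (NeZero.ne L), hf, mul_zpow]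
    ring
  simp only [Gf, Matrix.of_apply]
  rw [hsum, mul_zero]

theorem selection_rule_zn_plus_one (n L : ℕ) (hn : 1 ≤ n)
    (hdvd : 2 * n ∣ L) :
    ∀ i j : Fin L, ¬ ((n : ℤ) ∣ ((i : ℤ) - (j : ℤ))) →
      Gf L (fun z => z ^ n + 1) i j = 0 := by
  obtain ⟨c, hc⟩ := hdvd
  have hw : exp (2 * π * I / n) ^ n = 1 := (isPrimitiveRoot_exp n (by omega)).pow_eq_one
  refine Gf_apply_eq_zero_of_rotation_invariant _ (m := 2 * c) (by rw [hc, mul_comm 2, mul_assoc])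
    fun z => ?_
  rw [mul_pow, hw, mul_one]
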